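/- arXiv:1612.05776 — 3 statements merged into one kernel-verified Lean document; each statement's English description precedes it below -/
import Mathlib

section
/- Let $p \geq 1$ be a real number, $T > 0$, $M \geq 0$, and let $X : [0,T] \to \mathbb{R}_{\geq 0}$ be continuous with $X^p$ differentiable on $[0,T]$. Suppose $F : [0,T] \to \mathbb{R}_{\geq 0}$ is measurable and $\frac{1}{p}\frac{d}{dt}X^p + M X^p \leq F X^{p-1}$ on $[0,T]$. Define $X_\varepsilon := (X^p + \varepsilon^p)^{1/p}$ for $\varepsilon > 0$. Then $X_\varepsilon$ is differentiable and satisfies $\frac{d}{dt}X_\varepsilon + M X_\varepsilon \leq F + M\varepsilon$ on $[0,T]$. -/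
open Real Set

/-- Lemma 4.2 of the paper: if `X ≥ 0` is continuous on `[0,T]`, `X^p` is
differentiable with `(1/p) (X^p)' + M X^p ≤ F X^{p-1}` pointwise, then
`X_ε := (X^p + ε^p)^{1/p}` is differentiable and `X_ε' + M X_ε ≤ F + M ε` on `[0,T]`. -/
theorem stmt1 (p T M ε : ℝ) (hp : 1 ≤ p) (hT : 0 < T) (hM : 0 ≤ M) (hε : 0 < ε)
    (X F X' : ℝ → ℝ)
    (hXnonneg : ∀ t ∈ Icc (0:ℝ) T, 0 ≤ X t)
    (hXcont : ContinuousOn X (Icc (0:ℝ) T))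
    (hFnonneg : ∀ t ∈ Icc (0:ℝ) T, 0 ≤ F t)
    (hFmeas : Measurable F)
    (hXp : ∀ t ∈ Icc (0:ℝ) T, HasDerivAt (fun s => X s ^ p) (X' t) t)
    (hineq : ∀ t ∈ Icc (0:ℝ) T, (1 / p) * X' t + M * X t ^ p ≤ F t * X t ^ (p - 1)) :
    ∀ t ∈ Icc (0:ℝ) T,
      HasDerivAt (fun s => (X s ^ p + ε ^ p) ^ (1 / p))
          (deriv (fun s => (X s ^ p + ε ^ p) ^ (1 / p)) t) t ∧
      deriv (fun s => (X s ^ p + ε ^ p) ^ (1 / p)) t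
          + M * (X t ^ p + ε ^ p) ^ (1 / p) ≤ F t + M * ε := by
  intro t ht
  have hA : 0 ≤ X t := hXnonneg t ht
  have hp0 : 0 < p := lt_of_lt_of_le zero_lt_one hp
  have hB : 0 < X t ^ p + ε ^ p :=
    add_pos_of_nonneg_of_pos (Real.rpow_nonneg hA p) (Real.rpow_pos_of_pos hε p)
  have hd : HasDerivAt (fun s => (X s ^ p + ε ^ p) ^ (1 / p))
      ((1 / p) * (X t ^ p + ε ^ p) ^ (1 / p - 1) * X' t) t := by
    have h1 : HasDerivAt (fun s => X s ^ p + ε ^ p) (X' t) t := (hXp t ht).add_const _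
    have := h1.rpow_const (p := 1 / p) (Or.inl hB.ne')
    convert this using 1
    ring
  have hderiv := hd.deriv
  refine ⟨hderiv ▸ hd, ?_⟩
  rw [hderiv]
  have hBpos : (0:ℝ) < (X t ^ p + ε ^ p) ^ (1 / p - 1) := Real.rpow_pos_of_pos hB _
  have hexp : 0 ≤ 1 - 1 / p := by
    have : 1 / p ≤ 1 := by
      rw [div_le_one hp0]; exact hp
    linarith
  -- monotonicity estimates
  have hx1 : X t ^ (p - 1) ≤ (X t ^ p + ε ^ p) ^ (1 - 1 / p) := by
    have h1 : X t ^ (p - 1) = (X t ^ p) ^ (1 - 1 / p) := by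
      rw [← Real.rpow_mul hA]
      congr 1
      field_simp
    rw [h1]
    exact Real.rpow_le_rpow (Real.rpow_nonneg hA p)
      (le_add_of_nonneg_right (Real.rpow_nonneg hε.le p)) hexp
  have hx2 : ε ^ (p - 1) ≤ (X t ^ p + ε ^ p) ^ (1 - 1 / p) := by
    have h1 : ε ^ (p - 1) = (ε ^ p) ^ (1 - 1 / p) := by
      rw [← Real.rpow_mul hε.le]
      congr 1
      field_simp
    rw [h1]
    exact Real.rpow_le_rpow (Real.rpow_nonneg hε.le p)
      (le_add_of_nonneg_left (Real.rpow_nonneg hA p)) hexp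
  -- product identity: B^(1-1/p) * B^(1/p-1) = 1
  have hprod : (X t ^ p + ε ^ p) ^ (1 - 1 / p) * (X t ^ p + ε ^ p) ^ (1 / p - 1) = 1 := by
    rw [← Real.rpow_add hB]
    norm_num
  -- B^(1/p) = B^(1/p-1) * B
  have hsplit : (X t ^ p + ε ^ p) ^ (1 / p)
      = (X t ^ p + ε ^ p) ^ (1 / p - 1) * (X t ^ p + ε ^ p) := by
    rw [← Real.rpow_add_one hB.ne']
    ring_nf
  -- ε^p = ε * ε^(p-1)
  have hεsplit : ε ^ p = ε * ε ^ (p - 1) := by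
    nth_rewrite 2 [← Real.rpow_one ε]
    rw [← Real.rpow_add hε]
    ring_nf
  have hkey : (1 / p) * X' t ≤ F t * X t ^ (p - 1) - M * X t ^ p := by
    have := hineq t ht; linarith
  have hF : 0 ≤ F t := hFnonneg t ht
  have step1 : (1 / p) * (X t ^ p + ε ^ p) ^ (1 / p - 1) * X' t
      ≤ (F t * X t ^ (p - 1) - M * X t ^ p) * (X t ^ p + ε ^ p) ^ (1 / p - 1) := by
    have := mul_le_mul_of_nonneg_right hkey hBpos.le
    nlinarith [this]
  have step2 : F t * X t ^ (p - 1) * (X t ^ p + ε ^ p) ^ (1 / p - 1) ≤ F t := by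
    have h := mul_le_mul_of_nonneg_right hx1 hBpos.le
    calc F t * X t ^ (p - 1) * (X t ^ p + ε ^ p) ^ (1 / p - 1)
        = F t * (X t ^ (p - 1) * (X t ^ p + ε ^ p) ^ (1 / p - 1)) := by ring
      _ ≤ F t * ((X t ^ p + ε ^ p) ^ (1 - 1 / p) * (X t ^ p + ε ^ p) ^ (1 / p - 1)) :=
          mul_le_mul_of_nonneg_left h hF
      _ = F t := by rw [hprod]; ring
  have step3 : M * ε ^ p * (X t ^ p + ε ^ p) ^ (1 / p - 1) ≤ M * ε := by
    have h := mul_le_mul_of_nonneg_right hx2 hBpos.le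
    calc M * ε ^ p * (X t ^ p + ε ^ p) ^ (1 / p - 1)
        = (M * ε) * (ε ^ (p - 1) * (X t ^ p + ε ^ p) ^ (1 / p - 1)) := by
          rw [hεsplit]; ring
      _ ≤ (M * ε) * ((X t ^ p + ε ^ p) ^ (1 - 1 / p) * (X t ^ p + ε ^ p) ^ (1 / p - 1)) :=
          mul_le_mul_of_nonneg_left h (by positivity)
      _ = M * ε := by rw [hprod]; ring
  rw [hsplit]
  nlinarith [step1, step2, step3]
end

section
/- Let $\beta > 0$ and $\gamma \in \mathbb{R}$, and fix $\varrho_0 > 0$. There exist constants $C \geq 1$ and $c_0 > 0$ depending only on $\beta$, $\gamma$, $\varrho_0$ such that: for every $\varrho \in [0, \varrho_0]$ and every $C^1$ solution $(A,\Omega,\Theta) : [0,\infty) \to \mathbb{C}^3$ of the system $A' + \varrho\Omega = 0$, $\Omega' + \varrho^2\Omega - \varrho A - \gamma\varrho\Theta = 0$, $\Theta' + \beta\varrho^2\Theta + \gamma\varrho\Omega = 0$, one has $|(A,\Omega,\Theta)(t)| \leq C e^{-\frac{c_0}{2}\varrho^2 t}\,|(A,\Omega,\Theta)(0)|$ for all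 $t \geq 0$. -/
/-!
The energy `‖A‖² + ‖Ω‖² + ‖Θ‖²` alone is dissipated only in `Ω` and `Θ`: its derivative is
`-2ϱ²(‖Ω‖² + β‖Θ‖²)`. Correcting it by the small cross term `-2δϱ⟪A, Ω⟫` recovers the missing
`-2δϱ²‖A‖²` (since `A' = -ϱΩ` and `Ω'` contains `ϱA`), the other new terms being absorbed by
Young's inequality. For `δ` small in terms of `β, γ, ϱ₀` the corrected functional `L` is comparable
to the energy and satisfies `L' ≤ -δϱ²L`, hence decays like `exp (-δϱ²t)`. The system is
real-linear, so the argument runs in any real inner product space, `ℂ` being one.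
-/

open RealInnerProductSpace

theorem le_exp_neg_mul_mul_of_hasDerivAt {f f' : ℝ → ℝ} {c : ℝ} (hf : ∀ t, HasDerivAt f (f' t) t)
    (hle : ∀ t, f' t ≤ -c * f t) {t : ℝ} (ht : 0 ≤ t) : f t ≤ Real.exp (-c * t) * f 0 := by
  have hg : ∀ s, HasDerivAt (fun s ↦ Real.exp (c * s) * f s)
      (Real.exp (c * s) * (c * f s + f' s)) s := fun s ↦ by
    refine ((((hasDerivAt_id s).const_mul c).exp).mul (hf s)).congr_deriv ?_
    simp only [id]
    ring
  have hanti : Antitone fun s ↦ Real.exp (c * s) * f s :=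
    antitone_of_hasDerivAt_nonpos hg fun s ↦
      mul_nonpos_of_nonneg_of_nonpos (Real.exp_pos _).le (by linarith [hle s])
  have h := hanti ht
  simp only [mul_zero, Real.exp_zero, one_mul] at h
  calc f t = Real.exp (-c * t) * (Real.exp (c * t) * f t) := by
        rw [← mul_assoc, ← Real.exp_add, neg_mul, neg_add_cancel, Real.exp_zero, one_mul]
    _ ≤ Real.exp (-c * t) * f 0 := mul_le_mul_of_nonneg_left h (Real.exp_pos _).le

namespace LinearizedNSF

section Energy

variable {E : Type*} [NormedAddCommGroup E]

def energy (a o p : E) : ℝ := ‖a‖ ^ 2 + ‖o‖ ^ 2 + ‖p‖ ^ 2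

lemma energy_nonneg (a o p : E) : 0 ≤ energy a o p := by
  unfold energy; positivity

end Energy

variable {E : Type*} [NormedAddCommGroup E] [InnerProductSpace ℝ E]

structure IsSolution (β γ ϱ : ℝ) (A Ω Θ : ℝ → E) : Prop where
  hasDerivAt_A : ∀ t, HasDerivAt A (-(ϱ • Ω t)) t
  hasDerivAt_Ω : ∀ t, HasDerivAt Ω (ϱ • A t - ϱ ^ 2 • Ω t + (γ * ϱ) • Θ t) t
  hasDerivAt_Θ : ∀ t, HasDerivAt Θ (-((γ * ϱ) • Ω t) - (β * ϱ ^ 2) • Θ t) t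

def lyapunov (δ ϱ : ℝ) (a o p : E) : ℝ := energy a o p - 2 * δ * ϱ * ⟪a, o⟫

lemma two_mul_abs_inner_le_energy (a o p : E) : 2 * |⟪a, o⟫| ≤ energy a o p := by
  have hcs := abs_real_inner_le_norm a o
  unfold energy
  nlinarith [sq_nonneg (‖a‖ - ‖o‖), sq_nonneg ‖p‖]

lemma lyapunov_mem_Icc {δ ϱ : ℝ} (h₀ : 0 ≤ δ * ϱ) (h₁ : δ * ϱ ≤ 1 / 2) (a o p : E) :
    lyapunov δ ϱ a o p ∈ Set.Icc (energy a o p / 2) (3 / 2 * energy a o p) := by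
  have h := two_mul_abs_inner_le_energy a o p
  have hE := energy_nonneg a o p
  unfold lyapunov
  constructor <;>
    nlinarith [neg_abs_le ⟪a, o⟫, le_abs_self ⟪a, o⟫, mul_nonneg h₀ (abs_nonneg ⟪a, o⟫)]

lemma hasDerivAt_lyapunov {β γ ϱ δ : ℝ} {A Ω Θ : ℝ → E} (h : IsSolution β γ ϱ A Ω Θ) (t : ℝ) :
    HasDerivAt (fun s ↦ lyapunov δ ϱ (A s) (Ω s) (Θ s))
      (ϱ ^ 2 * (-2 * δ * ‖A t‖ ^ 2 - (2 - 2 * δ) * ‖Ω t‖ ^ 2 - 2 * β * ‖Θ t‖ ^ 2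
        + 2 * δ * ϱ * ⟪A t, Ω t⟫ - 2 * δ * γ * ⟪A t, Θ t⟫)) t := by
  have hA := h.hasDerivAt_A t
  have hΩ := h.hasDerivAt_Ω t
  have hΘ := h.hasDerivAt_Θ t
  refine (((hA.norm_sq.add hΩ.norm_sq).add hΘ.norm_sq).sub
    ((hA.inner ℝ hΩ).const_mul (2 * δ * ϱ))).congr_deriv ?_
  simp only [inner_add_right, inner_sub_right, inner_neg_right, inner_smul_right, inner_neg_left,
    inner_smul_left, real_inner_self_eq_norm_sq, real_inner_comm (A t),
    real_inner_comm (Ω t) (Θ t), RCLike.conj_to_real]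
  ring

lemma two_mul_mul_inner_le (k : ℝ) (a b : E) :
    2 * k * ⟪a, b⟫ ≤ ‖a‖ ^ 2 / 2 + 2 * k ^ 2 * ‖b‖ ^ 2 := by
  have h := norm_sub_sq_real a ((2 * k) • b)
  rw [inner_smul_right, norm_smul, mul_pow, Real.norm_eq_abs, sq_abs] at h
  nlinarith [sq_nonneg ‖a - (2 * k) • b‖]

lemma dissipation_le {β γ ϱ δ : ℝ} (hδ : 0 ≤ δ) (hδΩ : δ * (3 + 2 * ϱ ^ 2) ≤ 2)
    (hδΘ : δ * (1 + 2 * γ ^ 2) ≤ 2 * β) (a o p : E) :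
    -2 * δ * ‖a‖ ^ 2 - (2 - 2 * δ) * ‖o‖ ^ 2 - 2 * β * ‖p‖ ^ 2
      + 2 * δ * ϱ * ⟪a, o⟫ - 2 * δ * γ * ⟪a, p⟫ ≤ -δ * lyapunov δ ϱ a o p := by
  have hδ1 : δ ≤ 1 := by nlinarith [sq_nonneg ϱ]
  have hYo := two_mul_mul_inner_le (ϱ * (1 - δ)) a o
  have hYp := two_mul_mul_inner_le (-γ) a p
  have hκ : (ϱ * (1 - δ)) ^ 2 ≤ ϱ ^ 2 := by
    rw [mul_pow]; nlinarith [sq_nonneg ϱ, mul_nonneg hδ (sub_nonneg.2 hδ1)]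
  unfold lyapunov energy
  nlinarith [mul_le_mul_of_nonneg_left hYo hδ, mul_le_mul_of_nonneg_left hYp hδ,
    mul_le_mul_of_nonneg_left hκ (mul_nonneg hδ (sq_nonneg ‖o‖))]

theorem IsSolution.energy_le {β γ ϱ δ : ℝ} {A Ω Θ : ℝ → E} (h : IsSolution β γ ϱ A Ω Θ)
    (hδ : 0 ≤ δ) (hϱ : 0 ≤ ϱ) (hδΩ : δ * (3 + 2 * ϱ ^ 2) ≤ 2) (hδΘ : δ * (1 + 2 * γ ^ 2) ≤ 2 * β)
    {t : ℝ} (ht : 0 ≤ t) :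
    energy (A t) (Ω t) (Θ t) ≤ 3 * Real.exp (-(δ * ϱ ^ 2) * t) * energy (A 0) (Ω 0) (Θ 0) := by
  have hL : lyapunov δ ϱ (A t) (Ω t) (Θ t)
      ≤ Real.exp (-(δ * ϱ ^ 2) * t) * lyapunov δ ϱ (A 0) (Ω 0) (Θ 0) := by
    refine le_exp_neg_mul_mul_of_hasDerivAt (hasDerivAt_lyapunov h) (fun s ↦ ?_) ht
    have := mul_le_mul_of_nonneg_left (dissipation_le hδ hδΩ hδΘ (A s) (Ω s) (Θ s)) (sq_nonneg ϱ)
    linarith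
  have hδϱ : δ * ϱ ≤ 1 / 2 := by nlinarith [sq_nonneg (ϱ - 1)]
  obtain ⟨hLt, -⟩ := lyapunov_mem_Icc (mul_nonneg hδ hϱ) hδϱ (A t) (Ω t) (Θ t)
  obtain ⟨-, hL0⟩ := lyapunov_mem_Icc (mul_nonneg hδ hϱ) hδϱ (A 0) (Ω 0) (Θ 0)
  have hexp := Real.exp_pos (-(δ * ϱ ^ 2) * t)
  nlinarith [mul_le_mul_of_nonneg_left hL0 hexp.le]

theorem isSolution_of_complex {β γ ϱ : ℝ} {A Ω Θ A' Ω' Θ' : ℝ → ℂ}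
    (hA : ∀ t, HasDerivAt A (A' t) t) (hΩ : ∀ t, HasDerivAt Ω (Ω' t) t)
    (hΘ : ∀ t, HasDerivAt Θ (Θ' t) t) (eA : ∀ t, A' t + (ϱ : ℂ) * Ω t = 0)
    (eΩ : ∀ t, Ω' t + (ϱ : ℂ) ^ 2 * Ω t - (ϱ : ℂ) * A t - (γ : ℂ) * ϱ * Θ t = 0)
    (eΘ : ∀ t, Θ' t + (β : ℂ) * ϱ ^ 2 * Θ t + (γ : ℂ) * ϱ * Ω t = 0) :
    IsSolution β γ ϱ A Ω Θ where
  hasDerivAt_A t := (hA t).congr_deriv <| by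
    simp only [Complex.real_smul]; linear_combination eA t
  hasDerivAt_Ω t := (hΩ t).congr_deriv <| by
    simp only [Complex.real_smul, Complex.ofReal_mul, Complex.ofReal_pow]; linear_combination eΩ t
  hasDerivAt_Θ t := (hΘ t).congr_deriv <| by
    simp only [Complex.real_smul, Complex.ofReal_mul, Complex.ofReal_pow]; linear_combination eΘ t

noncomputable def decayRate (β γ ϱ₀ : ℝ) : ℝ := min β 1 / (3 + 2 * ϱ₀ ^ 2 + 2 * γ ^ 2)

section DecayRate

variable {β γ ϱ₀ : ℝ}

lemma decayRate_pos (hβ : 0 < β) : 0 < decayRate β γ ϱ₀ :=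
  div_pos (lt_min hβ one_pos) (by positivity)

lemma decayRate_mul_le {ϱ : ℝ} (hϱ : ϱ ^ 2 ≤ ϱ₀ ^ 2) : decayRate β γ ϱ₀ * (3 + 2 * ϱ ^ 2) ≤ 2 := by
  rw [decayRate, div_mul_eq_mul_div, div_le_iff₀ (by positivity)]
  nlinarith [min_le_right β 1, sq_nonneg ϱ, sq_nonneg γ]

lemma decayRate_mul_le_two_mul (hβ : 0 ≤ β) : decayRate β γ ϱ₀ * (1 + 2 * γ ^ 2) ≤ 2 * β := by
  rw [decayRate, div_mul_eq_mul_div, div_le_iff₀ (by positivity)]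
  nlinarith [min_le_left β 1, le_min hβ zero_le_one, sq_nonneg ϱ₀, sq_nonneg γ]

end DecayRate

end LinearizedNSF

theorem stmt6_general (β γ ϱ₀ : ℝ) (hβ : 0 < β) :
    ∃ C : ℝ, 1 ≤ C ∧ ∃ c₀ : ℝ, 0 < c₀ ∧
      ∀ ϱ ∈ Set.Icc (0:ℝ) ϱ₀, ∀ A Ω Θ A' Ω' Θ' : ℝ → ℂ,
        (∀ t : ℝ, HasDerivAt A (A' t) t) →
        (∀ t : ℝ, HasDerivAt Ω (Ω' t) t) →
        (∀ t : ℝ, HasDerivAt Θ (Θ' t) t) →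
        (∀ t : ℝ, A' t + (ϱ : ℂ) * Ω t = 0) →
        (∀ t : ℝ, Ω' t + (ϱ : ℂ) ^ 2 * Ω t - (ϱ : ℂ) * A t - (γ : ℂ) * ϱ * Θ t = 0) →
        (∀ t : ℝ, Θ' t + (β : ℂ) * ϱ ^ 2 * Θ t + (γ : ℂ) * ϱ * Ω t = 0) →
        ∀ t : ℝ, 0 ≤ t →
          Real.sqrt (‖A t‖ ^ 2 + ‖Ω t‖ ^ 2
              + ‖Θ t‖ ^ 2)
            ≤ C * Real.exp (-(c₀ / 2) * ϱ ^ 2 * t)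
              * Real.sqrt (‖A 0‖ ^ 2 + ‖Ω 0‖ ^ 2
                  + ‖Θ 0‖ ^ 2) := by
  set δ := LinearizedNSF.decayRate β γ ϱ₀
  have hδ : 0 < δ := LinearizedNSF.decayRate_pos hβ
  refine ⟨√3, by norm_num, δ, hδ, ?_⟩
  rintro ϱ ⟨hϱ, hϱϱ₀⟩ A Ω Θ A' Ω' Θ' hA hΩ hΘ eA eΩ eΘ t ht
  have hE := (LinearizedNSF.isSolution_of_complex hA hΩ hΘ eA eΩ eΘ).energy_le hδ.le hϱ
    (LinearizedNSF.decayRate_mul_le (pow_le_pow_left₀ hϱ hϱϱ₀ 2))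
    (LinearizedNSF.decayRate_mul_le_two_mul hβ.le) ht
  calc √(‖A t‖ ^ 2 + ‖Ω t‖ ^ 2 + ‖Θ t‖ ^ 2)
      ≤ √(3 * Real.exp (-(δ * ϱ ^ 2) * t) * (‖A 0‖ ^ 2 + ‖Ω 0‖ ^ 2 + ‖Θ 0‖ ^ 2)) :=
        Real.sqrt_le_sqrt hE
    _ = √3 * Real.exp (-(δ / 2) * ϱ ^ 2 * t) * √(‖A 0‖ ^ 2 + ‖Ω 0‖ ^ 2 + ‖Θ 0‖ ^ 2) := by
        rw [Real.sqrt_mul (by positivity), Real.sqrt_mul (by norm_num), ← Real.exp_half]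
        ring_nf

/-- uniform exponential decay `|(A,Ω,Θ)(t)| ≤ C e^{-c₀ϱ²t/2} |(A,Ω,Θ)(0)|`
for solutions of the frequency-localized linearized system, uniformly for `ϱ ∈ [0, ϱ₀]`. -/
theorem stmt6 (β γ ϱ₀ : ℝ) (hβ : 0 < β) (hϱ₀ : 0 < ϱ₀) :
    ∃ C : ℝ, 1 ≤ C ∧ ∃ c₀ : ℝ, 0 < c₀ ∧
      ∀ ϱ ∈ Set.Icc (0:ℝ) ϱ₀, ∀ A Ω Θ A' Ω' Θ' : ℝ → ℂ,
        (∀ t : ℝ, HasDerivAt A (A' t) t) →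
        (∀ t : ℝ, HasDerivAt Ω (Ω' t) t) →
        (∀ t : ℝ, HasDerivAt Θ (Θ' t) t) →
        (∀ t : ℝ, A' t + (ϱ : ℂ) * Ω t = 0) →
        (∀ t : ℝ, Ω' t + (ϱ : ℂ) ^ 2 * Ω t - (ϱ : ℂ) * A t - (γ : ℂ) * ϱ * Θ t = 0) →
        (∀ t : ℝ, Θ' t + (β : ℂ) * ϱ ^ 2 * Θ t + (γ : ℂ) * ϱ * Ω t = 0) →
        ∀ t : ℝ, 0 ≤ t →
          Real.sqrt (‖A t‖ ^ 2 + ‖Ω t‖ ^ 2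
              + ‖Θ t‖ ^ 2)
            ≤ C * Real.exp (-(c₀ / 2) * ϱ ^ 2 * t)
              * Real.sqrt (‖A 0‖ ^ 2 + ‖Ω 0‖ ^ 2
                  + ‖Θ 0‖ ^ 2) :=
  stmt6_general β γ ϱ₀ hβ
end

section
/- (Effective velocity reformulation.) Let $(a, \upsilon, \theta)$ solve $\partial_t a + \mathrm{div}\,\upsilon = f$, $\partial_t\upsilon - \widetilde{\mathcal{A}}\upsilon + \nabla a + \gamma\nabla\theta = g$ with $\widetilde{\mathcal{A}} = (\lambda+2\mu)^{-1}(\mu\Delta + (\lambda+\mu)\nabla\mathrm{div})$. Define the effective velocity $w := \nabla(-\Delta)^{-1}(a - \mathrm{div}\,\upsilon)$. Then $(a,w)$ satisfies $\partial_t w - \Delta w = \nabla(-\Delta)^{-1}(f - \mathrm{div}\,g) - \gamma\nabla\theta + w - (-\Delta)^{-1}\nabla a$ and $\partial_t a + a = f - \mathrm{div}\,w$. -/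
/-! The Lamé operator `𝒜̃` acts on gradients as `Δ`, so the divergence of the momentum equation
reads `∂ₜ div v - Δ div v + Δ(a + γθ) = div g`. Since `w` is a gradient with `div w = div v - a`,
differentiating `w` and substituting this and the mass equation gives the equation for `w`; the mass
equation with `div v = a + div w` is the damped equation for `a`. At a fixed frequency `ξ ≠ 0` all
of this is algebra on Fourier symbols. -/

open Complex

section FourierSymbols

variable {K ι : Type*} [Field K] [Fintype ι]

theorem sum_mul_lame_symbol (ξ v : ι → K) {lam μ N : K} (hν : lam + 2 * μ ≠ 0)
    (hN : ∑ k, ξ k ^ 2 = N) :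
    ∑ i, ξ i * ((lam + 2 * μ)⁻¹ * (-μ * N * v i - (lam + μ) * (∑ k, ξ k * v k) * ξ i))
      = -N * ∑ k, ξ k * v k := by
  have hsplit : ∀ i, ξ i * ((lam + 2 * μ)⁻¹ * (-μ * N * v i - (lam + μ) * (∑ k, ξ k * v k) * ξ i))
      = (lam + 2 * μ)⁻¹ * (-μ * N) * (ξ i * v i)
        - (lam + 2 * μ)⁻¹ * (lam + μ) * (∑ k, ξ k * v k) * ξ i ^ 2 := fun i => by ring
  rw [Finset.sum_congr rfl fun i _ => hsplit i, Finset.sum_sub_distrib, ← Finset.mul_sum,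
    ← Finset.mul_sum, hN]
  field_simp
  ring

theorem sum_mul_mul_mul_div (ξ : ι → K) (c X : K) {N : K} (hN : ∑ k, ξ k ^ 2 = N)
    (hN0 : N ≠ 0) : ∑ i, ξ i * (c * ξ i * X / N) = c * X := by
  have hsplit : ∀ i, ξ i * (c * ξ i * X / N) = ξ i ^ 2 * (c * X / N) := fun i => by ring
  rw [Finset.sum_congr rfl fun i _ => hsplit i, ← Finset.sum_mul, hN]
  field_simp

theorem sum_mul_momentum_eq (ξ v v' g : ι → K) {lam μ N p : K} (hν : lam + 2 * μ ≠ 0)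
    (hN : ∑ k, ξ k ^ 2 = N)
    (hmom : ∀ i, v' i - (lam + 2 * μ)⁻¹ * (-μ * N * v i - (lam + μ) * (∑ k, ξ k * v k) * ξ i)
      + p * ξ i = g i) :
    ∑ k, ξ k * v' k + N * ∑ k, ξ k * v k + p * N = ∑ k, ξ k * g k := by
  have hk : ∀ k, ξ k * g k = ξ k * v' k
      - ξ k * ((lam + 2 * μ)⁻¹ * (-μ * N * v k - (lam + μ) * (∑ j, ξ j * v j) * ξ k))
      + p * ξ k ^ 2 := fun k => by rw [← hmom k]; ring
  rw [Finset.sum_congr rfl fun k _ => hk k, Finset.sum_add_distrib, Finset.sum_sub_distrib,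
    ← Finset.mul_sum, hN, sum_mul_lame_symbol ξ v hν hN]
  ring

end FourierSymbols

theorem EuclideanSpace.sum_ofReal_sq {ι : Type*} [Fintype ι] (ξ : EuclideanSpace ℝ ι) :
    ∑ k, (ξ k : ℂ) ^ 2 = (‖ξ‖ : ℂ) ^ 2 := by
  exact_mod_cast (EuclideanSpace.real_norm_sq_eq ξ).symm

theorem stmt19_general {d : ℕ} (lam μ γ : ℝ) (hν : 0 < lam + 2 * μ)
    (ξ : EuclideanSpace ℝ (Fin d)) (hξ : ξ ≠ 0)
    (a θ f a' : ℝ → ℂ) (v g v' : ℝ → Fin d → ℂ)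
    (ha : ∀ t : ℝ, HasDerivAt a (a' t) t)
    (hv : ∀ (t : ℝ) (i : Fin d), HasDerivAt (fun s => v s i) (v' t i) t)
    (e1 : ∀ t : ℝ, a' t + I * (∑ i, (ξ i : ℂ) * v t i) = f t)
    (e2 : ∀ (t : ℝ) (i : Fin d),
      v' t i - ((lam + 2 * μ : ℝ) : ℂ)⁻¹
          * (-(μ : ℂ) * (‖ξ‖ : ℂ) ^ 2 * v t i
             - ((lam + μ : ℝ) : ℂ) * (∑ k, (ξ k : ℂ) * v t k) * (ξ i : ℂ))
        + I * a t * (ξ i : ℂ) + (γ : ℂ) * I * θ t * (ξ i : ℂ) = g t i)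
    (w : ℝ → Fin d → ℂ)
    (hw : ∀ (t : ℝ) (i : Fin d),
      w t i = I * (ξ i : ℂ) * (a t - I * (∑ k, (ξ k : ℂ) * v t k)) / (‖ξ‖ : ℂ) ^ 2) :
    (∀ (t : ℝ) (i : Fin d),
      HasDerivAt (fun s => w s i)
        (-(‖ξ‖ : ℂ) ^ 2 * w t i
          + I * (ξ i : ℂ) * (f t - I * (∑ k, (ξ k : ℂ) * g t k)) / (‖ξ‖ : ℂ) ^ 2
          - (γ : ℂ) * I * θ t * (ξ i : ℂ)
          + w t i
          - I * (ξ i : ℂ) * a t / (‖ξ‖ : ℂ) ^ 2) t) ∧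
    (∀ t : ℝ, a' t + a t = f t - I * (∑ i, (ξ i : ℂ) * w t i)) := by
  have hN := EuclideanSpace.sum_ofReal_sq ξ
  have hn : (‖ξ‖ : ℂ) ≠ 0 := by simpa using hξ
  have hN0 : (‖ξ‖ : ℂ) ^ 2 ≠ 0 := pow_ne_zero 2 hn
  have hν' : (lam : ℂ) + 2 * μ ≠ 0 := by exact_mod_cast hν.ne'
  have div_momentum := fun t => sum_mul_momentum_eq (fun k => (ξ k : ℂ)) (v t) (v' t) (g t)
    (p := I * a t + γ * I * θ t) hν' hN fun i => by push_cast at e2; linear_combination e2 t i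
  refine ⟨fun t i => ?_, fun t => ?_⟩
  · have hw_deriv : HasDerivAt (fun s => w s i)
        (I * (ξ i : ℂ) * (a' t - I * ∑ k, (ξ k : ℂ) * v' t k) / (‖ξ‖ : ℂ) ^ 2) t := by
      have hdiv_v := HasDerivAt.fun_sum fun k (_ : k ∈ Finset.univ) => (hv t k).const_mul (ξ k : ℂ)
      rw [funext fun s => hw s i]
      exact (((ha t).sub (hdiv_v.const_mul I)).const_mul _).div_const _
    convert hw_deriv using 1
    rw [hw t i, ← e1 t, ← div_momentum t]
    field_simp
    linear_combination -(ξ i : ℂ) * (‖ξ‖ : ℂ) ^ 2 * (a t + γ * θ t) * I_sq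
  · simp only [hw t, sum_mul_mul_mul_div _ _ _ hN hN0]
    linear_combination e1 t + (a t - I * ∑ k, (ξ k : ℂ) * v t k) * I_sq

/-- Statement 19 (effective velocity reformulation, stated at the level of Fourier
multipliers, i.e. on the Fourier side at a fixed frequency `ξ ≠ 0`; the symbol of `∇` is
`iξ`, of `div` is `iξ·`, of `Δ` is `-‖ξ‖²`, of `(-Δ)⁻¹` is `‖ξ‖⁻²`, and
`𝒜̃ = (λ+2μ)⁻¹(μΔ + (λ+μ)∇div)`).  If `(a, v, θ)` solves
`a' + div v = f`, `v' - 𝒜̃v + ∇a + γ∇θ = g`, and `w := ∇(-Δ)⁻¹(a - div v)`, then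
`w' - Δw = ∇(-Δ)⁻¹(f - div g) - γ∇θ + w - (-Δ)⁻¹∇a` and `a' + a = f - div w`. -/
theorem stmt19 {d : ℕ} (lam μ γ : ℝ) (hμ : 0 < μ) (hν : 0 < lam + 2 * μ)
    (ξ : EuclideanSpace ℝ (Fin d)) (hξ : ξ ≠ 0)
    (a θ f a' : ℝ → ℂ) (v g v' : ℝ → Fin d → ℂ)
    (ha : ∀ t : ℝ, HasDerivAt a (a' t) t)
    (hv : ∀ (t : ℝ) (i : Fin d), HasDerivAt (fun s => v s i) (v' t i) t)
    (e1 : ∀ t : ℝ, a' t + I * (∑ i, (ξ i : ℂ) * v t i) = f t)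
    (e2 : ∀ (t : ℝ) (i : Fin d),
      v' t i - ((lam + 2 * μ : ℝ) : ℂ)⁻¹
          * (-(μ : ℂ) * (‖ξ‖ : ℂ) ^ 2 * v t i
             - ((lam + μ : ℝ) : ℂ) * (∑ k, (ξ k : ℂ) * v t k) * (ξ i : ℂ))
        + I * a t * (ξ i : ℂ) + (γ : ℂ) * I * θ t * (ξ i : ℂ) = g t i)
    (w : ℝ → Fin d → ℂ)
    (hw : ∀ (t : ℝ) (i : Fin d),
      w t i = I * (ξ i : ℂ) * (a t - I * (∑ k, (ξ k : ℂ) * v t k)) / (‖ξ‖ : ℂ) ^ 2) :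
    (∀ (t : ℝ) (i : Fin d),
      HasDerivAt (fun s => w s i)
        (-(‖ξ‖ : ℂ) ^ 2 * w t i
          + I * (ξ i : ℂ) * (f t - I * (∑ k, (ξ k : ℂ) * g t k)) / (‖ξ‖ : ℂ) ^ 2
          - (γ : ℂ) * I * θ t * (ξ i : ℂ)
          + w t i
          - I * (ξ i : ℂ) * a t / (‖ξ‖ : ℂ) ^ 2) t) ∧
    (∀ t : ℝ, a' t + a t = f t - I * (∑ i, (ξ i : ℂ) * w t i)) :=
  stmt19_general lam μ γ hν ξ hξ a θ f a' v g v' ha hv e1 e2 w hw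
end
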